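/- Tight relaxation theorem: with notation of the replication relaxation, the relaxed bilevel value R equals the pessimistic value P_p, i.e., inf_{(λ,θ̄): θ̄∈C(λ)} sup_{θ∈C(λ), h(θ)≤h(θ̄)} F(λ,θ) = inf_λ sup_{θ∈Ψ(λ)} F(λ,θ), provided for every λ and every θ̄ ∈ C(λ) the level set {θ ∈ C(λ) : h(θ) ≤ h(θ̄)} contains Ψ(λ) whenever θ̄ is optimal, and Ψ(λ) ≠ ∅ for all λ. -/

import Mathlib

section Sublevel

variable {Θ β α : Type*} [Preorder β] [CompleteLattice α] {C : Set Θ} {h : Θ → β}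

theorem minimizers_subset_sublevel {θbar : Θ} (hθbar : θbar ∈ C) :
    {θ ∈ C | ∀ θ' ∈ C, h θ ≤ h θ'} ⊆ {θ ∈ C | h θ ≤ h θbar} :=
  fun _ hθ => ⟨hθ.1, hθ.2 θbar hθbar⟩

theorem sublevel_eq_minimizers {θ₀ : Θ} (hθ₀ : θ₀ ∈ {θ ∈ C | ∀ θ' ∈ C, h θ ≤ h θ'}) :
    {θ ∈ C | h θ ≤ h θ₀} = {θ ∈ C | ∀ θ' ∈ C, h θ ≤ h θ'} :=
  Set.Subset.antisymm (fun _ hθ => ⟨hθ.1, fun θ' hθ' => hθ.2.trans (hθ₀.2 θ' hθ')⟩)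
    (minimizers_subset_sublevel hθ₀.1)

/-- The infimum over `θbar` is attained at any minimizer of `h`, whose sublevel set is the
smallest one. -/
theorem iInf_iSup_sublevel_eq_iSup_minimizers (G : Θ → α)
    (hne : {θ ∈ C | ∀ θ' ∈ C, h θ ≤ h θ'}.Nonempty) :
    ⨅ θbar ∈ C, ⨆ θ ∈ {θ ∈ C | h θ ≤ h θbar}, G θ =
      ⨆ θ ∈ {θ ∈ C | ∀ θ' ∈ C, h θ ≤ h θ'}, G θ := by
  obtain ⟨θ₀, hθ₀⟩ := hne
  refine le_antisymm ?_ (le_iInf₂ fun θbar hθbar => ?_)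
  · exact (iInf₂_le θ₀ hθ₀.1).trans_eq (by rw [sublevel_eq_minimizers hθ₀])
  · exact biSup_mono (minimizers_subset_sublevel hθbar)

end Sublevel

theorem relaxation_eq_pessimistic_general {Λ Θ : Type*}
    (F : Λ × Θ → ℝ) (h : Θ → ℝ) (C : Λ → Set Θ)
    (Ψ : Λ → Set Θ)
    (hΨ : ∀ l, Ψ l = {θ ∈ C l | ∀ θ' ∈ C l, h θ ≤ h θ'})
    (hne : ∀ l, (Ψ l).Nonempty) :
    (⨅ l : Λ, ⨅ θbar ∈ C l, ⨆ θ ∈ {θ ∈ C l | h θ ≤ h θbar}, (F (l, θ) : EReal)) =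
      ⨅ l : Λ, ⨆ θ ∈ Ψ l, (F (l, θ) : EReal) := by
  refine iInf_congr fun l => ?_
  rw [hΨ l]
  exact iInf_iSup_sublevel_eq_iSup_minimizers _ (hΨ l ▸ hne l)

/-- Tight relaxation: the replication-relaxed bilevel value equals the pessimistic value. -/
theorem relaxation_eq_pessimistic {Λ Θ : Type*} [Nonempty Λ] [Nonempty Θ]
    (F : Λ × Θ → ℝ) (h : Θ → ℝ) (C : Λ → Set Θ) (hC : ∀ l, (C l).Nonempty)
    (Ψ : Λ → Set Θ)
    (hΨ : ∀ l, Ψ l = {θ ∈ C l | ∀ θ' ∈ C l, h θ ≤ h θ'})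
    (hne : ∀ l, (Ψ l).Nonempty) :
    (⨅ l : Λ, ⨅ θbar ∈ C l, ⨆ θ ∈ {θ ∈ C l | h θ ≤ h θbar}, (F (l, θ) : EReal)) =
      ⨅ l : Λ, ⨆ θ ∈ Ψ l, (F (l, θ) : EReal) :=
  relaxation_eq_pessimistic_general F h C Ψ hΨ hne
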